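/- arXiv:1506.07966 — 3 statements merged into one kernel-verified Lean document; each statement's English description precedes it below -/
import Mathlib

section
/- Let $V$ be a uniformly convex and uniformly smooth Banach space, $(f_n)_n \subset C([0,T], V)$ a sequence, and $f \in C([0,T], V)$ such that: (1) $\|f_n(t)\|_V$ converges uniformly in $t$ to $\|f(t)\|_V$, and (2) for every $\varphi \in C([0,T], V')$, the pairing $\langle \varphi(t), f_n(t) \rangle$ converges uniformly in $t$ to $\langle \varphi(t), f(t) \rangle$. Then $f_n \to f$ in $C([0,T], V)$, i.e., $\lim_{n\to\infty} \sup_{t\in[0,T]} \|f_n(t) - f(t)\|_V = 0$. -/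
open MeasureTheory Filter

set_option maxHeartbeats 1000000

/-- Uniform-in-time Radon–Riesz theorem: in a uniformly convex, uniformly smooth
Banach space `V`, if `‖f_n(t)‖` converges uniformly to `‖f(t)‖` and the dual pairings
`⟨φ(t), f_n(t)⟩` converge uniformly to `⟨φ(t), f(t)⟩` for all `φ ∈ C([0,T], V')`, then
`f_n → f` in `C([0,T], V)`. -/
theorem uniform_radon_riesz (T : ℝ) (hT : 0 < T)
    {V : Type*} [NormedAddCommGroup V] [NormedSpace ℝ V] [UniformConvexSpace V]
    -- uniform smoothness of V
    (hsmooth : ∀ ε > (0:ℝ), ∃ δ > (0:ℝ), ∀ x y : V, ‖x‖ = 1 → ‖y‖ ≤ δ →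
      ‖x + y‖ + ‖x - y‖ ≤ 2 + ε * ‖y‖)
    (f : ℕ → ℝ → V) (g : ℝ → V)
    (hf : ∀ n, ContinuousOn (f n) (Set.Icc 0 T)) (hg : ContinuousOn g (Set.Icc 0 T))
    (h1 : TendstoUniformlyOn (fun n t => ‖f n t‖) (fun t => ‖g t‖) atTop (Set.Icc 0 T))
    (h2 : ∀ φ : ℝ → StrongDual ℝ V, ContinuousOn φ (Set.Icc 0 T) →
      TendstoUniformlyOn (fun n t => φ t (f n t)) (fun t => φ t (g t)) atTop (Set.Icc 0 T)) :
    TendstoUniformlyOn f g atTop (Set.Icc 0 T) := by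
  classical
  set K : Set ℝ := Set.Icc 0 T with hK
  have hKc : IsCompact K := isCompact_Icc
  -- bound on g
  obtain ⟨M, hM⟩ := hKc.exists_bound_of_continuousOn hg
  set R : ℝ := max M 1 with hRdef
  have hR1 : (1:ℝ) ≤ R := le_max_right _ _
  have hR0 : (0:ℝ) < R := lt_of_lt_of_le one_pos hR1
  have hgR : ∀ t ∈ K, ‖g t‖ ≤ R := fun t ht => (hM t ht).trans (le_max_left _ _)
  rw [Metric.tendstoUniformlyOn_iff]
  intro ε hε
  set c : ℝ := ε / 4 with hcdef
  have hc0 : 0 < c := by positivity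
  have hε0pos : 0 < ε / (2 * R) := by positivity
  obtain ⟨δ, hδ0, hδ⟩ := exists_forall_closed_ball_dist_add_le_two_sub V hε0pos
  set ε0 : ℝ := ε / (2 * R) with hε0def
  set η : ℝ := min (ε / 4) (min (ε * ε / (8 * R)) (δ * ε / 25)) with hηdef
  have hη0 : 0 < η := by
    apply lt_min (by positivity) (lt_min (by positivity) (by positivity))
  have hη1 : η ≤ ε / 4 := min_le_left _ _
  have hη2 : η ≤ ε * ε / (8 * R) := (min_le_right _ _).trans (min_le_left _ _)
  have hη3 : η ≤ δ * ε / 25 := (min_le_right _ _).trans (min_le_right _ _)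
  -- uniform continuity of g
  have hgu := hKc.uniformContinuousOn_of_continuous hg
  rw [Metric.uniformContinuousOn_iff] at hgu
  obtain ⟨r, hr0, hr⟩ := hgu η hη0
  -- finite net
  have hcov : K ⊆ ⋃ x ∈ K, Metric.ball x r := fun x hx =>
    Set.mem_biUnion hx (Metric.mem_ball_self hr0)
  obtain ⟨s, hsK, hsfin, hscov⟩ :=
    hKc.elim_finite_subcover_image (fun x _ => Metric.isOpen_ball) hcov
  -- norming functionals
  set ψ : ℝ → StrongDual ℝ V := fun i => Classical.choose (exists_dual_vector'' ℝ (g i))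
    with hψdef
  have hψ : ∀ i, ‖ψ i‖ ≤ 1 ∧ ψ i (g i) = ‖g i‖ := fun i =>
    Classical.choose_spec (exists_dual_vector'' ℝ (g i))
  -- eventual statements
  have hA := Metric.tendstoUniformlyOn_iff.mp h1 η hη0
  have hB : ∀ᶠ n in atTop, ∀ i ∈ s, ∀ t ∈ K, dist ((ψ i) (g t)) ((ψ i) (f n t)) < η := by
    rw [eventually_all_finite hsfin]
    intro i _
    exact Metric.tendstoUniformlyOn_iff.mp (h2 (fun _ => ψ i) continuousOn_const) η hη0
  filter_upwards [hA, hB] with n hAn hBn t ht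
  rw [dist_eq_norm, norm_sub_rev]
  have hfn : |‖f n t‖ - ‖g t‖| < η := by
    have := hAn t ht
    rw [Real.dist_eq, abs_sub_comm] at this
    exact this
  by_cases hsmall : ‖g t‖ < c
  · have h1' : ‖f n t‖ < c + η := by
      have := abs_lt.mp hfn
      linarith [this.1, this.2]
    calc ‖f n t - g t‖ ≤ ‖f n t‖ + ‖g t‖ := norm_sub_le _ _
      _ < (c + η) + c := by linarith
      _ ≤ ε := by rw [hcdef]; linarith
  · push_neg at hsmall
    set a : ℝ := ‖g t‖ with hadef
    have ha0 : 0 < a := lt_of_lt_of_le hc0 hsmall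
    have haR : a ≤ R := hgR t ht
    -- find net point
    obtain ⟨i, his, hti⟩ : ∃ i ∈ s, t ∈ Metric.ball i r := by
      have := hscov ht
      simpa using this
    have hiK : i ∈ K := hsK his
    have hgi : ‖g t - g i‖ < η := by
      have := hr t ht i hiK (by simpa [Metric.mem_ball] using hti)
      rwa [dist_eq_norm] at this
    obtain ⟨hψn, hψv⟩ := hψ i
    have key : ∀ z : V, ψ i z ≤ ‖z‖ := by
      intro z
      calc ψ i z ≤ |ψ i z| := le_abs_self _
        _ = ‖ψ i z‖ := (Real.norm_eq_abs _).symm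
        _ ≤ ‖ψ i‖ * ‖z‖ := (ψ i).le_opNorm z
        _ ≤ 1 * ‖z‖ := by gcongr
        _ = ‖z‖ := one_mul _
    have e1 : ψ i (g i) - ψ i (g t) ≤ η := by
      have h := key (g i - g t)
      rw [map_sub] at h
      have : ‖g i - g t‖ < η := by rwa [norm_sub_rev] at hgi
      linarith
    have e2 : |‖g i‖ - a| < η := lt_of_le_of_lt (abs_norm_sub_norm_le _ _)
      (by rwa [norm_sub_rev] at hgi)
    have e3 : a - 2 * η ≤ ψ i (g t) := by
      have := abs_lt.mp e2
      rw [hψv] at e1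
      linarith [this.1, this.2]
    have e4 : a - 3 * η < ψ i (f n t) := by
      have := hBn i his t ht
      rw [Real.dist_eq] at this
      have := abs_lt.mp this
      linarith [this.1, this.2]
    have e6 : 2 * a - 5 * η ≤ ‖f n t + g t‖ := by
      have h := key (f n t + g t)
      rw [map_add] at h
      linarith
    -- normalize
    set b : ℝ := ‖f n t‖ with hbdef
    set m : ℝ := max a b with hmdef
    have ham : a ≤ m := le_max_left _ _
    have hbm : b ≤ m := le_max_right _ _
    have hm0 : 0 < m := lt_of_lt_of_le ha0 ham
    have hmab : m ≤ a + η := by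
      have := abs_lt.mp hfn
      exact max_le (by linarith) (by linarith [this.2])
    set x : V := a⁻¹ • f n t with hxdef
    set x' : V := m⁻¹ • f n t with hx'def
    set y : V := a⁻¹ • g t with hydef
    have hy1 : ‖y‖ = 1 := by
      rw [hydef, norm_smul, Real.norm_eq_abs, abs_of_pos (inv_pos.mpr ha0), ← hadef,
        inv_mul_cancel₀ (ne_of_gt ha0)]
    have hx'1 : ‖x'‖ ≤ 1 := by
      rw [hx'def, norm_smul, Real.norm_eq_abs, abs_of_pos (inv_pos.mpr hm0), ← hbdef]
      exact inv_mul_le_one_of_le₀ hbm hm0.le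
    have hxx' : ‖x - x'‖ ≤ η / c := by
      have hxe : x - x' = (a⁻¹ - m⁻¹) • f n t := by rw [hxdef, hx'def, sub_smul]
      rw [hxe, norm_smul, Real.norm_eq_abs, ← hbdef]
      have him : a⁻¹ - m⁻¹ = (m - a) / (a * m) := by field_simp
      have hma0 : 0 ≤ m - a := by linarith
      rw [abs_of_nonneg (by rw [him]; exact div_nonneg hma0 (by positivity))]
      rw [him, div_mul_eq_mul_div, div_le_div_iff₀ (by positivity) hc0]
      have hma : m - a ≤ η := by linarith
      have hca : c ≤ a := hsmall
      have hb0 : (0:ℝ) ≤ b := norm_nonneg _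
      calc (m - a) * b * c ≤ η * b * c :=
            mul_le_mul_of_nonneg_right (mul_le_mul_of_nonneg_right hma hb0) hc0.le
        _ ≤ η * m * c :=
            mul_le_mul_of_nonneg_right (mul_le_mul_of_nonneg_left hbm hη0.le) hc0.le
        _ ≤ η * m * a := mul_le_mul_of_nonneg_left hca (by positivity)
        _ = η * (a * m) := by ring
    have hxy : 2 - 5 * (η / c) ≤ ‖x + y‖ := by
      have hxe : x + y = a⁻¹ • (f n t + g t) := by rw [hxdef, hydef, smul_add]
      rw [hxe, norm_smul, Real.norm_eq_abs, abs_of_pos (inv_pos.mpr ha0)]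
      have h6 : a⁻¹ * (2 * a - 5 * η) ≤ a⁻¹ * ‖f n t + g t‖ := by
        apply mul_le_mul_of_nonneg_left e6 (inv_pos.mpr ha0).le
      have heq : a⁻¹ * (2 * a - 5 * η) = 2 - 5 * (η / a) := by field_simp
      have hηa : η / a ≤ η / c := by
        apply div_le_div_of_nonneg_left hη0.le hc0 hsmall
      linarith
    have hx'y : 2 - δ < ‖x' + y‖ := by
      have htri : ‖x + y‖ ≤ ‖x - x'‖ + ‖x' + y‖ := by
        calc ‖x + y‖ = ‖(x - x') + (x' + y)‖ := by congr 1; abel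
          _ ≤ ‖x - x'‖ + ‖x' + y‖ := norm_add_le _ _
      have hηc : η / c < δ / 6 := by
        rw [hcdef, div_lt_div_iff₀ (by positivity) (by norm_num)]
        linarith [hη3, mul_pos hδ0 hε]
      linarith
    have hx'my : ‖x' - y‖ < ε0 := by
      by_contra hcon
      push_neg at hcon
      have := hδ hx'1 hy1.le hcon
      linarith
    have hxmy : ‖x - y‖ < η / c + ε0 := by
      calc ‖x - y‖ = ‖(x - x') + (x' - y)‖ := by congr 1; abel
        _ ≤ ‖x - x'‖ + ‖x' - y‖ := norm_add_le _ _
        _ < η / c + ε0 := by linarith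
    have hfinal : ‖f n t - g t‖ = a * ‖x - y‖ := by
      have : x - y = a⁻¹ • (f n t - g t) := by rw [hxdef, hydef, smul_sub]
      rw [this, norm_smul, Real.norm_eq_abs, abs_of_pos (inv_pos.mpr ha0)]
      field_simp
    rw [hfinal]
    have hstep : a * ‖x - y‖ < a * (η / c + ε0) :=
      mul_lt_mul_of_pos_left hxmy ha0
    have hstep2 : a * (η / c + ε0) ≤ R * (η / c + ε0) := by
      apply mul_le_mul_of_nonneg_right haR (by positivity)
    have hstep3 : R * (η / c + ε0) ≤ ε := by
      have h1 : R * ε0 = ε / 2 := by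
        rw [hε0def]; field_simp
      have hRne : R ≠ 0 := ne_of_gt hR0
      have hεne : ε ≠ 0 := ne_of_gt hε
      have hq : η / c ≤ ε / (2 * R) := by
        rw [div_le_iff₀ hc0]
        calc η ≤ ε * ε / (8 * R) := hη2
          _ = ε / (2 * R) * c := by rw [hcdef]; field_simp; ring
      have h2 : R * (η / c) ≤ ε / 2 := by
        calc R * (η / c) ≤ R * (ε / (2 * R)) := mul_le_mul_of_nonneg_left hq hR0.le
          _ = ε / 2 := by field_simp
      linarith [mul_add R (η/c) ε0, h1, h2]
    linarith
end

section
/- For the network coupling operator $\mathcal G_u(\rho) = (\nu \mathbf B_{>1}^T)^- \mathbf M^{-1} \int_\Gamma (\nu \mathbf B_{>1})^- (\nu \mathbf U)^+ \rho \, d\omega$ (with $\mathbf M^{-1}$ the Moore-Penrose pseudoinverse of the diagonal matrix $\mathbf M$), and for all $\rho \in L^\infty(\Gamma_T, d\mu_u^+)$, the weighted $L^1$ contraction estimate $\|\mathcal G_u(\rho)\|_{1,w,-} \le \|\rho\|_{1,w,+}$ holds with weight matrix $\overline{\mathbf W} = \mathbf I$, i.e., $\int_{\Gamma_T} |\mathcal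 G_u(\rho)|^T (\nu u)^- \, d\omega\, dt \le \int_{\Gamma_T} |\rho|^T (\nu u)^+ \, d\omega\, dt$. -/
open MeasureTheory

/-- Diagonal entry of the coupling matrix `M(t) = ∫_Γ (νB_{>1})⁻ (νU(t))⁻ (νB_{>1}ᵀ)⁻ dω`. -/
noncomputable def netM {k n : ℕ} (B : Matrix (Fin k) (Fin n) ℝ) (ν : Fin 2 → ℝ)
    (u : ℝ → Fin 2 → Fin n → ℝ) (t : ℝ) (i : Fin k) : ℝ :=
  ∑ ω : Fin 2, ∑ j : Fin n, max (-(ν ω * B i j)) 0 * max (-(ν ω * u t ω j)) 0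

/-- The network coupling operator
`G_u(ρ) = (νB_{>1}ᵀ)⁻ M⁻¹ ∫_Γ (νB_{>1})⁻ (νU)⁺ ρ dω`, where `M⁻¹` is the
Moore–Penrose pseudoinverse of the diagonal matrix `M`. -/
noncomputable def netG {k n : ℕ} (B : Matrix (Fin k) (Fin n) ℝ) (ν : Fin 2 → ℝ)
    (u : ℝ → Fin 2 → Fin n → ℝ) (ρ : ℝ → Fin 2 → Fin n → ℝ)
    (t : ℝ) (ω : Fin 2) (j : Fin n) : ℝ :=
  ∑ i : Fin k, max (-(ν ω * B i j)) 0 *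
    (if netM B ν u t i = 0 then 0 else (netM B ν u t i)⁻¹) *
    (∑ ω' : Fin 2, ∑ j' : Fin n,
      max (-(ν ω' * B i j')) 0 * max (ν ω' * u t ω' j') 0 * ρ t ω' j')

/-- The network coupling operator `G_u` is a contraction with respect to the
weighted `L¹` boundary norms with weight `W = I`:
`∫_{Γ_T} |G_u(ρ)|ᵀ (νu)⁻ dω dt ≤ ∫_{Γ_T} |ρ|ᵀ (νu)⁺ dω dt`. -/
theorem netG_contraction {k n : ℕ} (T : ℝ) (hT : 0 < T)
    (B : Matrix (Fin k) (Fin n) ℝ)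
    (hentries : ∀ i j, B i j = -1 ∨ B i j = 0 ∨ B i j = 1)
    (hcol1 : ∀ j (i i' : Fin k), B i j = 1 → B i' j = 1 → i = i')
    (hcolm : ∀ j (i i' : Fin k), B i j = -1 → B i' j = -1 → i = i')
    (ν : Fin 2 → ℝ) (hν : ∀ ω, ν ω = -1 ∨ ν ω = 1)
    (u : ℝ → Fin 2 → Fin n → ℝ) (ρ : ℝ → Fin 2 → Fin n → ℝ)
    (hint1 : IntegrableOn (fun t => ∑ ω : Fin 2, ∑ j : Fin n,
      |netG B ν u ρ t ω j| * max (-(ν ω * u t ω j)) 0) (Set.Ioc 0 T))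
    (hint2 : IntegrableOn (fun t => ∑ ω : Fin 2, ∑ j : Fin n,
      |ρ t ω j| * max (ν ω * u t ω j) 0) (Set.Ioc 0 T)) :
    (∫ t in (0:ℝ)..T, ∑ ω : Fin 2, ∑ j : Fin n,
        |netG B ν u ρ t ω j| * max (-(ν ω * u t ω j)) 0) ≤
    (∫ t in (0:ℝ)..T, ∑ ω : Fin 2, ∑ j : Fin n,
        |ρ t ω j| * max (ν ω * u t ω j) 0) := by
  have key : ∀ t, (∑ ω : Fin 2, ∑ j : Fin n,
      |netG B ν u ρ t ω j| * max (-(ν ω * u t ω j)) 0) ≤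
      ∑ ω : Fin 2, ∑ j : Fin n, |ρ t ω j| * max (ν ω * u t ω j) 0 := by
    intro t
    set m : Fin k → ℝ := netM B ν u t with hm
    have hm_nonneg : ∀ i, 0 ≤ m i := fun i =>
      Finset.sum_nonneg fun _ _ => Finset.sum_nonneg fun _ _ =>
        mul_nonneg (le_max_right _ _) (le_max_right _ _)
    set c : Fin k → ℝ := fun i => if m i = 0 then 0 else (m i)⁻¹ with hc_def
    set S : Fin k → ℝ := fun i => ∑ ω' : Fin 2, ∑ j' : Fin n,
      max (-(ν ω' * B i j')) 0 * max (ν ω' * u t ω' j') 0 * ρ t ω' j' with hS_def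
    have hc : ∀ i, 0 ≤ c i := by
      intro i; dsimp [c]; split
      · exact le_refl 0
      · exact inv_nonneg.mpr (hm_nonneg i)
    have hcm : ∀ i, c i * m i ≤ 1 := by
      intro i
      rcases eq_or_ne (m i) 0 with h | h
      · simp [c, h]
      · simp [c, h, inv_mul_cancel₀ h]
    -- `a` values are 0/1 indicators
    have ha : ∀ (i : Fin k) (ω : Fin 2) (j : Fin n),
        max (-(ν ω * B i j)) 0 = if B i j = -ν ω then 1 else 0 := by
      intro i ω j
      rcases hν ω with h1 | h1 <;> rcases hentries i j with h2 | h2 | h2 <;>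
        simp [h1, h2] <;> norm_num
    have hsum_a : ∀ (ω : Fin 2) (j : Fin n),
        (∑ i : Fin k, max (-(ν ω * B i j)) 0) ≤ 1 := by
      intro ω j
      simp only [ha]
      rw [Finset.sum_boole]
      norm_cast
      rw [Finset.card_le_one]
      intro i hi i' hi'
      simp only [Finset.mem_filter] at hi hi'
      rcases hν ω with h1 | h1
      · exact hcol1 j i i' (by simp [hi.2, h1]) (by simp [hi'.2, h1])
      · exact hcolm j i i' (by simp [hi.2, h1]) (by simp [hi'.2, h1])
    have hG : ∀ (ω : Fin 2) (j : Fin n),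
        |netG B ν u ρ t ω j| ≤ ∑ i : Fin k,
          max (-(ν ω * B i j)) 0 * (c i * |S i|) := by
      intro ω j
      refine (Finset.abs_sum_le_sum_abs _ _).trans ?_
      refine Finset.sum_le_sum fun i _ => ?_
      rw [abs_mul, abs_mul, abs_of_nonneg (le_max_right _ _), abs_of_nonneg (hc i)]
      rw [mul_assoc]
    calc (∑ ω : Fin 2, ∑ j : Fin n, |netG B ν u ρ t ω j| * max (-(ν ω * u t ω j)) 0)
        ≤ ∑ ω : Fin 2, ∑ j : Fin n, (∑ i : Fin k,
            max (-(ν ω * B i j)) 0 * (c i * |S i|)) * max (-(ν ω * u t ω j)) 0 := by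
          refine Finset.sum_le_sum fun ω _ => Finset.sum_le_sum fun j _ => ?_
          exact mul_le_mul_of_nonneg_right (hG ω j) (le_max_right _ _)
      _ = ∑ i : Fin k, (c i * |S i|) * m i := by
          simp only [Finset.sum_mul]
          calc (∑ ω : Fin 2, ∑ j : Fin n, ∑ i : Fin k,
                max (-(ν ω * B i j)) 0 * (c i * |S i|) * max (-(ν ω * u t ω j)) 0)
              = ∑ ω : Fin 2, ∑ i : Fin k, ∑ j : Fin n,
                max (-(ν ω * B i j)) 0 * (c i * |S i|) * max (-(ν ω * u t ω j)) 0 :=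
                Finset.sum_congr rfl fun ω _ => Finset.sum_comm
            _ = ∑ i : Fin k, ∑ ω : Fin 2, ∑ j : Fin n,
                max (-(ν ω * B i j)) 0 * (c i * |S i|) * max (-(ν ω * u t ω j)) 0 :=
                Finset.sum_comm
            _ = ∑ i : Fin k, (c i * |S i|) * m i := by
                simp only [hm, netM, Finset.mul_sum]
                exact Finset.sum_congr rfl fun i _ => Finset.sum_congr rfl fun ω _ =>
                  Finset.sum_congr rfl fun j _ => by ring
      _ ≤ ∑ i : Fin k, |S i| := by
          refine Finset.sum_le_sum fun i _ => ?_
          calc (c i * |S i|) * m i = (c i * m i) * |S i| := by ring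
            _ ≤ 1 * |S i| := mul_le_mul_of_nonneg_right (hcm i) (abs_nonneg _)
            _ = |S i| := one_mul _
      _ ≤ ∑ i : Fin k, ∑ ω' : Fin 2, ∑ j' : Fin n,
            max (-(ν ω' * B i j')) 0 * (max (ν ω' * u t ω' j') 0 * |ρ t ω' j'|) := by
          refine Finset.sum_le_sum fun i _ => ?_
          refine (Finset.abs_sum_le_sum_abs _ _).trans ?_
          refine Finset.sum_le_sum fun ω' _ => ?_
          refine (Finset.abs_sum_le_sum_abs _ _).trans ?_
          refine Finset.sum_le_sum fun j' _ => ?_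
          rw [abs_mul, abs_mul, abs_of_nonneg (le_max_right _ _),
            abs_of_nonneg (le_max_right _ _), mul_assoc]
      _ = ∑ ω' : Fin 2, ∑ j' : Fin n, (∑ i : Fin k, max (-(ν ω' * B i j')) 0) *
            (max (ν ω' * u t ω' j') 0 * |ρ t ω' j'|) := by
          rw [Finset.sum_comm]
          refine Finset.sum_congr rfl fun ω' _ => ?_
          rw [Finset.sum_comm]
          exact Finset.sum_congr rfl fun j' _ => (Finset.sum_mul _ _ _).symm
      _ ≤ ∑ ω' : Fin 2, ∑ j' : Fin n, |ρ t ω' j'| * max (ν ω' * u t ω' j') 0 := by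
          refine Finset.sum_le_sum fun ω' _ => Finset.sum_le_sum fun j' _ => ?_
          calc (∑ i : Fin k, max (-(ν ω' * B i j')) 0) *
                (max (ν ω' * u t ω' j') 0 * |ρ t ω' j'|)
              ≤ 1 * (max (ν ω' * u t ω' j') 0 * |ρ t ω' j'|) :=
                mul_le_mul_of_nonneg_right (hsum_a ω' j')
                  (mul_nonneg (le_max_right _ _) (abs_nonneg _))
            _ = |ρ t ω' j'| * max (ν ω' * u t ω' j') 0 := by ring
  have h1 : IntervalIntegrable (fun t => ∑ ω : Fin 2, ∑ j : Fin n,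
      |netG B ν u ρ t ω j| * max (-(ν ω * u t ω j)) 0) volume 0 T :=
    (intervalIntegrable_iff_integrableOn_Ioc_of_le hT.le).mpr hint1
  have h2 : IntervalIntegrable (fun t => ∑ ω : Fin 2, ∑ j : Fin n,
      |ρ t ω j| * max (ν ω * u t ω j) 0) volume 0 T :=
    (intervalIntegrable_iff_integrableOn_Ioc_of_le hT.le).mpr hint2
  exact intervalIntegral.integral_mono_on hT.le h1 h2 fun x _ => key x
end

section
/- For the network coupling operator $\mathcal G_u$, mass is conserved at inner nodes: assuming the energy conservation condition $\int_\Gamma ((\nu \mathbf B_{>1})^-(\nu u))_i \, d\omega = 0$ for every inner node $v_i$, it holds for all $\rho \in L^\infty(\Gamma_T, d\mu_u^+)$ and almost all $t \in [0,T]$ that $\int_\Gamma (\nu\mathbf B_{>1})^- (\nu\mathbf U)^- \mathcal H_u(\rho) \, d\omega = \int_\Gamma (\nu\mathbf B_{>1})^- (\nu\mathbf U)^+ \rho \, d\omega$, where $\mathcal H_u(\rho) = (\nu\mathbf B_{=1}^T)^- \rho_{\mathrm{out}} + \mathcal G_u(\rho)$. -/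
/-- mass conservation at inner nodes: under the energy conservation condition
`∫_Γ ((νB_{>1})⁻(νu))_i dω = 0` for every inner node, the boundary operator
`ℋ_u(ρ) = (νB_{=1}ᵀ)⁻ ρ_out + G_u(ρ)` satisfies
`∫_Γ (νB_{>1})⁻ (νU)⁻ ℋ_u(ρ) dω = ∫_Γ (νB_{>1})⁻ (νU)⁺ ρ dω`. -/
theorem netH_mass_conservation {k l n : ℕ}
    (Bin : Matrix (Fin k) (Fin n) ℝ) (Bout : Matrix (Fin l) (Fin n) ℝ)
    (hin : ∀ i j, Bin i j = -1 ∨ Bin i j = 0 ∨ Bin i j = 1)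
    (hout : ∀ i j, Bout i j = -1 ∨ Bout i j = 0 ∨ Bout i j = 1)
    (hcol1 : ∀ j (i i' : Fin k), Bin i j = 1 → Bin i' j = 1 → i = i')
    (hcolm : ∀ j (i i' : Fin k), Bin i j = -1 → Bin i' j = -1 → i = i')
    -- a column of the incidence matrix has one +1 and one -1: an inner and an outer node
    -- adjacent to the same edge carry entries of different signs
    (hsep : ∀ j (i : Fin k) (i' : Fin l), Bin i j ≠ 0 → Bout i' j ≠ 0 → Bin i j ≠ Bout i' j)
    (ν : Fin 2 → ℝ) (hν : ∀ ω, ν ω = -1 ∨ ν ω = 1)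
    (u : ℝ → Fin 2 → Fin n → ℝ) (ρ : ℝ → Fin 2 → Fin n → ℝ) (ρout : ℝ → Fin l → ℝ)
    (t : ℝ)
    -- energy conservation at each inner node at time t
    (henergy : ∀ i : Fin k,
      (∑ ω : Fin 2, ∑ j : Fin n, max (-(ν ω * Bin i j)) 0 * (ν ω * u t ω j)) = 0) :
    ∀ i : Fin k,
      (∑ ω : Fin 2, ∑ j : Fin n, max (-(ν ω * Bin i j)) 0 * max (-(ν ω * u t ω j)) 0 *
        ((∑ i' : Fin l, max (-(ν ω * Bout i' j)) 0 * ρout t i') + netG Bin ν u ρ t ω j))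
      = ∑ ω : Fin 2, ∑ j : Fin n, max (-(ν ω * Bin i j)) 0 * max (ν ω * u t ω j) 0 * ρ t ω j := by
  intro i
  -- outer part vanishes
  have hz : ∀ ω j (i' : Fin l),
      max (-(ν ω * Bin i j)) 0 * max (-(ν ω * Bout i' j)) 0 = 0 := by
    intro ω j i'
    rcases hν ω with h | h <;> rcases hin i j with h1 | h1 | h1 <;>
      rcases hout i' j with h2 | h2 | h2 <;>
      simp [h, h1, h2] <;>
      exact absurd (h1.trans h2.symm) (hsep j i i' (by norm_num [h1]) (by norm_num [h2]))
  -- collapse of netG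
  have hc : ∀ ω j (i'' : Fin k),
      max (-(ν ω * Bin i j)) 0 * max (-(ν ω * Bin i'' j)) 0 =
        if i'' = i then max (-(ν ω * Bin i j)) 0 else 0 := by
    intro ω j i''
    split
    · next h =>
      subst h
      rcases hν ω with h | h <;> rcases hin i'' j with h1 | h1 | h1 <;> norm_num [h, h1]
    · next h =>
      rcases hν ω with hh | hh <;> rcases hin i j with h1 | h1 | h1 <;>
        rcases hin i'' j with h2 | h2 | h2 <;> simp [hh, h1, h2]
      · exact absurd (hcol1 j i i'' h1 h2) (fun e => h (e.symm))
      · exact absurd (hcolm j i i'' h1 h2) (fun e => h (e.symm))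
  set S : ℝ := ∑ ω : Fin 2, ∑ j : Fin n,
      max (-(ν ω * Bin i j)) 0 * max (ν ω * u t ω j) 0 * ρ t ω j with hS
  set m : ℝ := netM Bin ν u t i with hm
  have key : ∀ ω j, max (-(ν ω * Bin i j)) 0 * max (-(ν ω * u t ω j)) 0 *
      ((∑ i' : Fin l, max (-(ν ω * Bout i' j)) 0 * ρout t i') + netG Bin ν u ρ t ω j)
      = max (-(ν ω * Bin i j)) 0 * max (-(ν ω * u t ω j)) 0 *
          ((if m = 0 then 0 else m⁻¹) * S) := by
    intro ω j
    have h1 : max (-(ν ω * Bin i j)) 0 *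
        (∑ i' : Fin l, max (-(ν ω * Bout i' j)) 0 * ρout t i') = 0 := by
      rw [Finset.mul_sum]
      refine Finset.sum_eq_zero fun i' _ => ?_
      linear_combination ρout t i' * hz ω j i'
    have h2 : max (-(ν ω * Bin i j)) 0 * netG Bin ν u ρ t ω j
        = max (-(ν ω * Bin i j)) 0 * ((if m = 0 then 0 else m⁻¹) * S) := by
      rw [netG, Finset.mul_sum]
      have step : ∀ i'' : Fin k, max (-(ν ω * Bin i j)) 0 *
          (max (-(ν ω * Bin i'' j)) 0 *
           (if netM Bin ν u t i'' = 0 then 0 else (netM Bin ν u t i'')⁻¹) *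
           (∑ ω' : Fin 2, ∑ j' : Fin n,
             max (-(ν ω' * Bin i'' j')) 0 * max (ν ω' * u t ω' j') 0 * ρ t ω' j'))
          = if i'' = i then max (-(ν ω * Bin i j)) 0 *
              ((if m = 0 then 0 else m⁻¹) * S) else 0 := by
        intro i''
        have hcc := hc ω j i''
        by_cases hii : i'' = i
        · subst hii
          rw [if_pos rfl] at hcc ⊢
          rw [← hS, ← hm]
          linear_combination ((if m = 0 then 0 else m⁻¹) * S) * hcc
        · rw [if_neg hii] at hcc ⊢
          linear_combination ((if netM Bin ν u t i'' = 0 then 0 else (netM Bin ν u t i'')⁻¹) *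
            (∑ ω' : Fin 2, ∑ j' : Fin n,
              max (-(ν ω' * Bin i'' j')) 0 * max (ν ω' * u t ω' j') 0 * ρ t ω' j')) * hcc
      simp only [step, Finset.sum_ite_eq', Finset.mem_univ, if_true]
    calc max (-(ν ω * Bin i j)) 0 * max (-(ν ω * u t ω j)) 0 *
        ((∑ i' : Fin l, max (-(ν ω * Bout i' j)) 0 * ρout t i') + netG Bin ν u ρ t ω j)
        = max (-(ν ω * u t ω j)) 0 *
          (max (-(ν ω * Bin i j)) 0 * (∑ i' : Fin l, max (-(ν ω * Bout i' j)) 0 * ρout t i')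
           + max (-(ν ω * Bin i j)) 0 * netG Bin ν u ρ t ω j) := by ring
      _ = _ := by rw [h1, h2]; ring
  simp only [key]
  rw [show (∑ ω : Fin 2, ∑ j : Fin n, max (-(ν ω * Bin i j)) 0 * max (-(ν ω * u t ω j)) 0 *
      ((if m = 0 then 0 else m⁻¹) * S)) = m * ((if m = 0 then 0 else m⁻¹) * S) by
    rw [hm, netM, Finset.sum_mul]
    exact Finset.sum_congr rfl fun ω _ => by rw [Finset.sum_mul]]
  by_cases hm0 : m = 0
  · have hnn : ∀ ω j, (0:ℝ) ≤ max (-(ν ω * Bin i j)) 0 * max (ν ω * u t ω j) 0 :=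
      fun ω j => mul_nonneg (le_max_right _ _) (le_max_right _ _)
    have hsum : (∑ ω : Fin 2, ∑ j : Fin n,
        max (-(ν ω * Bin i j)) 0 * max (ν ω * u t ω j) 0) = 0 := by
      have e1 := henergy i
      have e2 : (∑ ω : Fin 2, ∑ j : Fin n,
          max (-(ν ω * Bin i j)) 0 * max (-(ν ω * u t ω j)) 0) = 0 := by
        rw [← netM, ← hm]; exact hm0
      have hdec : ∀ ω j, max (-(ν ω * Bin i j)) 0 * max (ν ω * u t ω j) 0
          = max (-(ν ω * Bin i j)) 0 * (ν ω * u t ω j)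
            + max (-(ν ω * Bin i j)) 0 * max (-(ν ω * u t ω j)) 0 := by
        intro ω j
        have hx : max (ν ω * u t ω j) 0 = (ν ω * u t ω j) + max (-(ν ω * u t ω j)) 0 := by
          rcases le_total (ν ω * u t ω j) 0 with h | h
          · rw [max_eq_right h, max_eq_left (by linarith)]; ring
          · rw [max_eq_left h, max_eq_right (by linarith)]; ring
        rw [hx]; ring
      simp only [hdec, Finset.sum_add_distrib]
      rw [e1, e2]; ring
    have heach : ∀ ω j, max (-(ν ω * Bin i j)) 0 * max (ν ω * u t ω j) 0 = 0 := by
      have h2 : ∀ ω : Fin 2, (∑ j : Fin n,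
          max (-(ν ω * Bin i j)) 0 * max (ν ω * u t ω j) 0) = 0 := by
        have := (Finset.sum_eq_zero_iff_of_nonneg (fun ω _ =>
          Finset.sum_nonneg fun j _ => hnn ω j)).mp hsum
        exact fun ω => this ω (Finset.mem_univ ω)
      intro ω j
      exact (Finset.sum_eq_zero_iff_of_nonneg (fun j _ => hnn ω j)).mp (h2 ω) j
        (Finset.mem_univ j)
    have hS0 : S = 0 := by
      rw [hS]
      refine Finset.sum_eq_zero fun ω _ => Finset.sum_eq_zero fun j _ => ?_
      linear_combination ρ t ω j * heach ω j
    simp [hm0, hS0]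
  · simp only [hm0, if_false]
    field_simp
end
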